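/- There exists a universal constant c > 0 with the following property. Let X ⊆ ℝⁿ and Y ⊆ ℝᵐ be nonempty convex compact sets, κ = max{max_{x∈X}‖x‖₂, max_{y∈Y}‖y‖₂} > 0, C_X = cone({κ}×X), C_Y = cone({κ}×Y), and let F : X×Y → ℝ be convex in its first argument and concave in its second. Let p, q ∈ ℕ with q ≥ p, ω_t = t^p, θ_t = t^q, T ≥ 1, and let x_t ∈ X, y_t ∈ Y, f_t ∈ ℝⁿ, g_t ∈ ℝᵐ (t = 1,…,T) satisfy: f_t is a subgradient of F(·, y_t) at x_t with ‖f_t‖₂ ≤ L, g_t is a supergradient of F(x_t, ·) at y_t with ‖g_t‖₂ ≤ L; the CBA⁺ recursions hold: u_0^x = 0, u_t^x = π_{C_X}(u_{t−1}^x + ω_t (⟨f_t, x_t⟩/κ, −f_t)) with, for every t, some β_t ≥ 0 such that u_{t−1}^x = β_t·(κ, x_t); and u_0^y = 0, u_t^y = π_{C_Y}(u_{t−1}^y + ω_t (−⟨g_t, y_t⟩/κ, g_t)) with, for every t, some β'_t ≥ 0 such that u_{t−1}^y = β'_t·(κ, y_t). Set (x̄_T, ȳ_T) = ∑_{t=1}^T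 θ_t (x_t, y_t) / ∑_{t=1}^T θ_t. Then sup_{y∈Y} F(x̄_T, y) − inf_{x∈X} F(x, ȳ_T) ≤ c · κ L (q+1) / (√(p+1) · √T). -/

import Mathlib

/-!
Each player's CBA⁺ state `u_t` is the projection onto the cone `cone({κ} × X)` of
`u_{t-1} + t^p v_t`, where `v_t = (⟪f_t, x_t⟫/κ, -f_t)` satisfies `⟪v_t, (κ, x')⟫ = ⟪f_t, x_t - x'⟫`
and, by the choice rule, is orthogonal to `u_{t-1}`. A projection onto a cone is orthogonal to its
residual, so `‖u_T‖² ≤ ∑ t^{2p} ‖v_t‖² ≤ 2L² ∑ t^{2p}`, while pairing the residual with `(κ, x')`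
gives `t^p ⟪v_t, (κ, x')⟫ ≤ ⟪u_t - u_{t-1}, (κ, x')⟫`. Since `⟪u_t, (κ, x')⟫ ≥ 0`, summation by
parts against the increasing weights `t^{q-p}` bounds the `t^q`-weighted regret by
`T^{q-p} ⟪u_T, (κ, x')⟫ ≤ 2κL T^{q-p} (∑ t^{2p})^{1/2}`.

Convexity–concavity and the (super)gradient inequalities bound the duality gap of the
`t^q`-averages by the sum of the two weighted regrets divided by `∑ t^q`. For `T > q + 1` the
estimates `∑_{t ≤ T} t^{2p} ≲ T^{2p+1}/(p+1)` and `T^{q+1} ≤ (q+1) ∑_{t ≤ T} t^q` turn this into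
the rate `κL(q+1)/√((p+1)T)`; for `T ≤ q + 1` the trivial bound `4κL` on the gap already suffices.
-/

set_option autoImplicit false

open scoped RealInnerProductSpace
open Finset

noncomputable section

/-- The lifted vector `(t, y) ∈ ℝ × ℝⁿ = ℝ^{n+1}`. -/
def pr {n : ℕ} (t : ℝ) (y : EuclideanSpace ℝ (Fin n)) :
    EuclideanSpace ℝ (Fin (n + 1)) :=
  WithLp.toLp 2 (Fin.cons t (fun i => y i) : Fin (n + 1) → ℝ)

/-- The conic hull `cone({κ} × X) = {α • (κ, x) : α ≥ 0, x ∈ X}`. -/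
def coneLift {n : ℕ} (κ : ℝ) (X : Set (EuclideanSpace ℝ (Fin n))) :
    Set (EuclideanSpace ℝ (Fin (n + 1))) :=
  {u | ∃ α : ℝ, 0 ≤ α ∧ ∃ x ∈ X, u = α • pr κ x}

/-- `p` is the Euclidean orthogonal projection of `u` onto the set `S`. -/
def IsProjOn {E : Type*} [NormedAddCommGroup E] [InnerProductSpace ℝ E]
    (u : E) (S : Set E) (p : E) : Prop :=
  p ∈ S ∧ ∀ z ∈ S, dist u p ≤ dist u z

section ConeProjection

variable {E : Type*} [NormedAddCommGroup E] [InnerProductSpace ℝ E] {K : Set E} {u v z : E}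

theorem IsProjOn.inner_sub_nonpos (hK : Convex ℝ K) (h : IsProjOn u K v) (hz : z ∈ K) :
    ⟪u - v, z - v⟫ ≤ 0 := by
  have : Nonempty K := ⟨⟨v, h.1⟩⟩
  refine (norm_eq_iInf_iff_real_inner_le_zero hK h.1).mp (le_antisymm ?_ ?_) z hz
  · exact le_ciInf fun w => by simpa only [dist_eq_norm] using h.2 w w.2
  · exact ciInf_le ⟨0, Set.forall_mem_range.2 fun w : K => norm_nonneg (u - w)⟩ (⟨v, h.1⟩ : K)

theorem IsProjOn.inner_sub_self_eq_zero (hK : Convex ℝ K)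
    (hKsmul : ∀ w ∈ K, ∀ c : ℝ, 0 ≤ c → c • w ∈ K) (h : IsProjOn u K v) :
    ⟪u - v, v⟫ = 0 := by
  have h₂ := h.inner_sub_nonpos hK (hKsmul v h.1 2 zero_le_two)
  have h₀ := h.inner_sub_nonpos hK (hKsmul v h.1 0 le_rfl)
  rw [show (2 : ℝ) • v - v = v by module] at h₂
  rw [zero_smul, zero_sub, inner_neg_right] at h₀
  linarith

theorem IsProjOn.inner_nonpos (hK : Convex ℝ K)
    (hKsmul : ∀ w ∈ K, ∀ c : ℝ, 0 ≤ c → c • w ∈ K) (h : IsProjOn u K v) (hz : z ∈ K) :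
    ⟪u - v, z⟫ ≤ 0 := by
  have := h.inner_sub_nonpos hK hz
  rw [inner_sub_right, h.inner_sub_self_eq_zero hK hKsmul] at this
  linarith

theorem IsProjOn.norm_sq_le (hK : Convex ℝ K)
    (hKsmul : ∀ w ∈ K, ∀ c : ℝ, 0 ≤ c → c • w ∈ K) (h : IsProjOn u K v) :
    ‖v‖ ^ 2 ≤ ‖u‖ ^ 2 := by
  have := norm_add_sq_real (u - v) v
  rw [sub_add_cancel, h.inner_sub_self_eq_zero hK hKsmul] at this
  nlinarith [sq_nonneg ‖u - v‖]

end ConeProjection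

theorem convex_conicHull {E : Type*} [AddCommGroup E] [Module ℝ E] {S : Set E}
    (hS : Convex ℝ S) : Convex ℝ {u | ∃ α : ℝ, 0 ≤ α ∧ ∃ s ∈ S, u = α • s} := by
  rintro _ ⟨α, hα, s, hs, rfl⟩ _ ⟨β, hβ, s', hs', rfl⟩ a b ha hb hab
  rcases (by positivity : 0 ≤ a * α + b * β).eq_or_lt with hγ | hγ
  · have haα : a * α = 0 := by nlinarith [mul_nonneg ha hα, mul_nonneg hb hβ]
    have hbβ : b * β = 0 := by nlinarith [mul_nonneg ha hα, mul_nonneg hb hβ]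
    exact ⟨0, le_rfl, s, hs, by rw [smul_smul, smul_smul, haα, hbβ]; simp⟩
  · refine ⟨a * α + b * β, hγ.le, (a * α / (a * α + b * β)) • s + (b * β / (a * α + b * β)) • s',
      hS hs hs' (by positivity) (by positivity) (by field_simp), ?_⟩
    match_scalars <;> field_simp

section Lift

variable {n : ℕ}

theorem inner_pr (a b : ℝ) (v w : EuclideanSpace ℝ (Fin n)) :
    ⟪pr a v, pr b w⟫ = a * b + ⟪v, w⟫ := by
  simp only [PiLp.inner_apply, RCLike.inner_apply, starRingEnd_apply, star_trivial]
  rw [Fin.sum_univ_succ]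
  simp [pr, mul_comm]

theorem norm_pr_sq (a : ℝ) (v : EuclideanSpace ℝ (Fin n)) :
    ‖pr a v‖ ^ 2 = a ^ 2 + ‖v‖ ^ 2 := by
  rw [← real_inner_self_eq_norm_sq, ← real_inner_self_eq_norm_sq, inner_pr, sq]

theorem pr_add_smul (a b s t : ℝ) (v w : EuclideanSpace ℝ (Fin n)) :
    pr (a * s + b * t) (a • v + b • w) = a • pr s v + b • pr t w := by
  ext i
  refine Fin.cases ?_ (fun j => ?_) i <;> simp [pr]

theorem inner_pr_regret {κ : ℝ} (hκ : κ ≠ 0) (f x y : EuclideanSpace ℝ (Fin n)) :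
    ⟪pr (⟪f, x⟫ / κ) (-f), pr κ y⟫ = ⟪f, x - y⟫ := by
  rw [inner_pr, div_mul_cancel₀ _ hκ, inner_neg_left, inner_sub_right]
  ring

theorem norm_pr_regret_sq_le {κ L : ℝ} (hκ : 0 < κ) {f x : EuclideanSpace ℝ (Fin n)}
    (hf : ‖f‖ ≤ L) (hx : ‖x‖ ≤ κ) : ‖pr (⟪f, x⟫ / κ) (-f)‖ ^ 2 ≤ 2 * L ^ 2 := by
  have hfx : |⟪f, x⟫ / κ| ≤ L := by
    rw [abs_div, abs_of_pos hκ, div_le_iff₀ hκ]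
    exact (abs_real_inner_le_norm f x).trans
      (mul_le_mul hf hx (norm_nonneg x) ((norm_nonneg f).trans hf))
  rw [norm_pr_sq, norm_neg, ← sq_abs (⟪f, x⟫ / κ)]
  nlinarith [abs_nonneg (⟪f, x⟫ / κ), norm_nonneg f]

theorem norm_pr_sq_le {κ : ℝ} {x : EuclideanSpace ℝ (Fin n)} (hx : ‖x‖ ≤ κ) :
    ‖pr κ x‖ ^ 2 ≤ 2 * κ ^ 2 := by
  rw [norm_pr_sq]
  nlinarith [norm_nonneg x]

variable {κ : ℝ} {X : Set (EuclideanSpace ℝ (Fin n))}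

theorem pr_mem_coneLift {x : EuclideanSpace ℝ (Fin n)} (hx : x ∈ X) : pr κ x ∈ coneLift κ X :=
  ⟨1, zero_le_one, x, hx, (one_smul ℝ _).symm⟩

theorem smul_mem_coneLift {u : EuclideanSpace ℝ (Fin (n + 1))} (hu : u ∈ coneLift κ X)
    {c : ℝ} (hc : 0 ≤ c) : c • u ∈ coneLift κ X := by
  obtain ⟨α, hα, x, hx, rfl⟩ := hu
  exact ⟨c * α, mul_nonneg hc hα, x, hx, smul_smul c α _⟩

theorem convex_coneLift (hX : Convex ℝ X) : Convex ℝ (coneLift κ X) := by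
  have himage : Convex ℝ (pr κ '' X) := by
    rintro _ ⟨x, hx, rfl⟩ _ ⟨y, hy, rfl⟩ a b ha hb hab
    refine ⟨a • x + b • y, hX hx hy ha hb hab, ?_⟩
    rw [← pr_add_smul, ← add_mul, hab, one_mul]
  have hcone : coneLift κ X = {u | ∃ α : ℝ, 0 ≤ α ∧ ∃ s ∈ pr κ '' X, u = α • s} := by
    ext u
    simp [coneLift]
  exact hcone ▸ convex_conicHull himage

theorem inner_coneLift_pr_nonneg (hXκ : ∀ x ∈ X, ‖x‖ ≤ κ) {u : EuclideanSpace ℝ (Fin (n + 1))}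
    (hu : u ∈ coneLift κ X) {y : EuclideanSpace ℝ (Fin n)} (hy : ‖y‖ ≤ κ) :
    0 ≤ ⟪u, pr κ y⟫ := by
  obtain ⟨α, hα, x, hx, rfl⟩ := hu
  rw [real_inner_smul_left, inner_pr]
  have hxy := neg_abs_le ⟪x, y⟫
  have := (abs_real_inner_le_norm x y).trans
    (mul_le_mul (hXκ x hx) hy (norm_nonneg y) ((norm_nonneg x).trans (hXκ x hx)))
  exact mul_nonneg hα (by linarith)

end Lift

theorem sum_pow_mul_le_of_pow_mul_le_sub {a r : ℕ → ℝ} {p q T : ℕ} (hpq : p ≤ q)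
    (ha : ∀ t ≤ T, 0 ≤ a t) (hstep : ∀ t ∈ Icc 1 T, (t : ℝ) ^ p * r t ≤ a t - a (t - 1)) :
    ∑ t ∈ Icc 1 T, (t : ℝ) ^ q * r t ≤ (T : ℝ) ^ (q - p) * a T := by
  induction T with
  | zero => simpa using mul_nonneg (pow_nonneg le_rfl _) (ha 0 le_rfl)
  | succ T ih =>
    have ih := ih (fun t ht => ha t (ht.trans T.le_succ))
      (fun t ht => hstep t (Icc_subset_Icc_right T.le_succ ht))
    have hlast := hstep (T + 1) (by simp)
    push_cast at hlast ⊢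
    have hsplit : ((T : ℝ) + 1) ^ q = ((T : ℝ) + 1) ^ (q - p) * ((T : ℝ) + 1) ^ p := by
      rw [← pow_add, Nat.sub_add_cancel hpq]
    have hmono : (T : ℝ) ^ (q - p) * a T ≤ ((T : ℝ) + 1) ^ (q - p) * a T := by
      gcongr
      · exact ha T T.le_succ
      · linarith
    calc ∑ t ∈ Icc 1 (T + 1), (t : ℝ) ^ q * r t
        = ∑ t ∈ Icc 1 T, (t : ℝ) ^ q * r t + ((T : ℝ) + 1) ^ q * r (T + 1) := by
          rw [sum_Icc_succ_top (by omega)]; push_cast; rfl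
      _ ≤ ((T : ℝ) + 1) ^ (q - p) * a T + ((T : ℝ) + 1) ^ (q - p) * (a (T + 1) - a T) := by
          rw [hsplit, mul_assoc]
          gcongr
          linarith
      _ = ((T : ℝ) + 1) ^ (q - p) * a (T + 1) := by ring

section CBAPlus

variable {E : Type*} [NormedAddCommGroup E] [InnerProductSpace ℝ E] {K : Set E}
  {u v : ℕ → E} {p T : ℕ}

theorem cbaPlus_norm_sq_le (hK : Convex ℝ K) (hKsmul : ∀ w ∈ K, ∀ c : ℝ, 0 ≤ c → c • w ∈ K)
    (hu0 : u 0 = 0)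
    (hproj : ∀ t ∈ Icc 1 T, IsProjOn (u (t - 1) + ((t : ℝ) ^ p) • v t) K (u t))
    (horth : ∀ t ∈ Icc 1 T, ⟪u (t - 1), v t⟫ = 0) {B : ℝ}
    (hv : ∀ t ∈ Icc 1 T, ‖v t‖ ^ 2 ≤ B) :
    ‖u T‖ ^ 2 ≤ B * ∑ t ∈ Icc 1 T, (t : ℝ) ^ (2 * p) := by
  induction T with
  | zero => simp [hu0]
  | succ T ih =>
    have hrestrict : Icc 1 T ⊆ Icc 1 (T + 1) := Icc_subset_Icc_right T.le_succ
    have ih := ih (fun t ht => hproj t (hrestrict ht)) (fun t ht => horth t (hrestrict ht))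
      (fun t ht => hv t (hrestrict ht))
    have hlast : T + 1 ∈ Icc 1 (T + 1) := by simp
    have hproj' := (hproj _ hlast).norm_sq_le hK hKsmul
    have horth' := horth _ hlast
    have hv' := hv _ hlast
    rw [Nat.add_sub_cancel] at hproj' horth'
    rw [norm_add_sq_real, real_inner_smul_right, horth', norm_smul, mul_pow, Real.norm_eq_abs,
      sq_abs, ← pow_mul, mul_comm p] at hproj'
    rw [sum_Icc_succ_top (by omega), mul_add]
    have hw : (0 : ℝ) ≤ ((T + 1 : ℕ) : ℝ) ^ (2 * p) := by positivity
    nlinarith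

theorem cbaPlus_sum_inner_le {q : ℕ} (hpq : p ≤ q) (hK : Convex ℝ K)
    (hKsmul : ∀ w ∈ K, ∀ c : ℝ, 0 ≤ c → c • w ∈ K) (hu0 : u 0 = 0)
    (hproj : ∀ t ∈ Icc 1 T, IsProjOn (u (t - 1) + ((t : ℝ) ^ p) • v t) K (u t))
    {z : E} (hz : z ∈ K) (hdual : ∀ w ∈ K, 0 ≤ ⟪w, z⟫) :
    ∑ t ∈ Icc 1 T, (t : ℝ) ^ q * ⟪v t, z⟫ ≤ (T : ℝ) ^ (q - p) * ⟪u T, z⟫ := by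
  refine sum_pow_mul_le_of_pow_mul_le_sub (a := fun t => ⟪u t, z⟫) hpq (fun t ht => ?_)
    (fun t ht => ?_)
  · rcases t.eq_zero_or_pos with rfl | ht0
    · simp [hu0]
    · exact hdual _ (hproj t (mem_Icc.2 ⟨ht0, ht⟩)).1
  · have := (hproj t ht).inner_nonpos hK hKsmul hz
    rw [inner_sub_left, inner_add_left, real_inner_smul_left] at this
    linarith

end CBAPlus

theorem cbaPlus_regret_le {n : ℕ} {X : Set (EuclideanSpace ℝ (Fin n))} (hX : Convex ℝ X)
    {κ L : ℝ} (hκ : 0 < κ) (hL : 0 ≤ L) (hXκ : ∀ x ∈ X, ‖x‖ ≤ κ) {p q T : ℕ} (hpq : p ≤ q)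
    {x f : ℕ → EuclideanSpace ℝ (Fin n)} (hx : ∀ t ∈ Icc 1 T, x t ∈ X)
    (hf : ∀ t ∈ Icc 1 T, ‖f t‖ ≤ L) {u : ℕ → EuclideanSpace ℝ (Fin (n + 1))} (hu0 : u 0 = 0)
    (hproj : ∀ t ∈ Icc 1 T,
      IsProjOn (u (t - 1) + ((t : ℝ) ^ p) • pr (⟪f t, x t⟫ / κ) (-(f t))) (coneLift κ X) (u t))
    (hchoice : ∀ t ∈ Icc 1 T, ∃ β : ℝ, 0 ≤ β ∧ u (t - 1) = β • pr κ (x t))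
    {x' : EuclideanSpace ℝ (Fin n)} (hx' : x' ∈ X) :
    ∑ t ∈ Icc 1 T, (t : ℝ) ^ q * ⟪f t, x t - x'⟫ ≤
      2 * κ * L * (T : ℝ) ^ (q - p) * √(∑ t ∈ Icc 1 T, (t : ℝ) ^ (2 * p)) := by
  have hKsmul : ∀ w ∈ coneLift κ X, ∀ c : ℝ, 0 ≤ c → c • w ∈ coneLift κ X :=
    fun w hw c hc => smul_mem_coneLift hw hc
  have horth : ∀ t ∈ Icc 1 T, ⟪u (t - 1), pr (⟪f t, x t⟫ / κ) (-(f t))⟫ = 0 := by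
    intro t ht
    obtain ⟨β, -, hβ⟩ := hchoice t ht
    rw [hβ, real_inner_smul_left, real_inner_comm, inner_pr_regret hκ.ne', sub_self,
      inner_zero_right, mul_zero]
  have hu := cbaPlus_norm_sq_le (convex_coneLift hX) hKsmul hu0 hproj horth
    (fun t ht => norm_pr_regret_sq_le hκ (hf t ht) (hXκ _ (hx t ht)))
  have hz := norm_pr_sq_le (κ := κ) (hXκ x' hx')
  have huz : ‖u T‖ * ‖pr κ x'‖ ≤ 2 * κ * L * √(∑ t ∈ Icc 1 T, (t : ℝ) ^ (2 * p)) := by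
    refine le_of_pow_le_pow_left₀ two_ne_zero (by positivity) ?_
    rw [mul_pow, mul_pow, Real.sq_sqrt (by positivity)]
    calc ‖u T‖ ^ 2 * ‖pr κ x'‖ ^ 2
        ≤ (2 * L ^ 2 * ∑ t ∈ Icc 1 T, (t : ℝ) ^ (2 * p)) * (2 * κ ^ 2) := by gcongr
      _ = (2 * κ * L) ^ 2 * ∑ t ∈ Icc 1 T, (t : ℝ) ^ (2 * p) := by ring
  calc ∑ t ∈ Icc 1 T, (t : ℝ) ^ q * ⟪f t, x t - x'⟫
      = ∑ t ∈ Icc 1 T, (t : ℝ) ^ q * ⟪pr (⟪f t, x t⟫ / κ) (-(f t)), pr κ x'⟫ := by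
        simp only [inner_pr_regret hκ.ne']
    _ ≤ (T : ℝ) ^ (q - p) * ⟪u T, pr κ x'⟫ :=
        cbaPlus_sum_inner_le hpq (convex_coneLift hX) hKsmul hu0 hproj (pr_mem_coneLift hx')
          fun w hw => inner_coneLift_pr_nonneg hXκ hw (hXκ x' hx')
    _ ≤ (T : ℝ) ^ (q - p) * (2 * κ * L * √(∑ t ∈ Icc 1 T, (t : ℝ) ^ (2 * p))) := by
        gcongr
        exact (real_inner_le_norm _ _).trans huz
    _ = 2 * κ * L * (T : ℝ) ^ (q - p) * √(∑ t ∈ Icc 1 T, (t : ℝ) ^ (2 * p)) := by ring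

theorem sub_le_inv_sum_mul_sum_of_subgradients {ι E E' : Type*} [NormedAddCommGroup E]
    [InnerProductSpace ℝ E] [NormedAddCommGroup E'] [InnerProductSpace ℝ E']
    {X : Set E} {Y : Set E'} {F : E → E' → ℝ} {s : Finset ι} {w : ι → ℝ}
    {x f : ι → E} {y g : ι → E'} {x' : E} {y' : E'}
    (hFx : ConvexOn ℝ X fun a => F a y') (hFy : ConcaveOn ℝ Y fun b => F x' b)
    (hw : ∀ i ∈ s, 0 ≤ w i) (hws : 0 < ∑ i ∈ s, w i)
    (hx : ∀ i ∈ s, x i ∈ X) (hy : ∀ i ∈ s, y i ∈ Y)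
    (hf : ∀ i ∈ s, F (x i) (y i) + ⟪f i, x' - x i⟫ ≤ F x' (y i))
    (hg : ∀ i ∈ s, F (x i) y' ≤ F (x i) (y i) + ⟪g i, y' - y i⟫) :
    F (s.centerMass w x) y' - F x' (s.centerMass w y) ≤
      (∑ i ∈ s, w i)⁻¹ * ∑ i ∈ s, w i * (⟪g i, y' - y i⟫ + ⟪f i, x i - x'⟫) := by
  calc F (s.centerMass w x) y' - F x' (s.centerMass w y)
      ≤ s.centerMass w (fun i => F (x i) y') - s.centerMass w (fun i => F x' (y i)) :=
        sub_le_sub (hFx.map_centerMass_le hw hws hx) (hFy.le_map_centerMass hw hws hy)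
    _ = (∑ i ∈ s, w i)⁻¹ * ∑ i ∈ s, w i * (F (x i) y' - F x' (y i)) := by
        simp only [centerMass, smul_eq_mul, mul_sub, sum_sub_distrib]
    _ ≤ (∑ i ∈ s, w i)⁻¹ * ∑ i ∈ s, w i * (⟪g i, y' - y i⟫ + ⟪f i, x i - x'⟫) := by
        gcongr with i hi
        · exact hw i hi
        · have := hf i hi
          have := hg i hi
          rw [← neg_sub x', inner_neg_right]
          linarith

theorem inner_sub_le_two_mul {E : Type*} [NormedAddCommGroup E] [InnerProductSpace ℝ E]
    {f a b : E} {κ L : ℝ} (hf : ‖f‖ ≤ L) (ha : ‖a‖ ≤ κ) (hb : ‖b‖ ≤ κ) :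
    ⟪f, a - b⟫ ≤ 2 * κ * L := by
  calc ⟪f, a - b⟫ ≤ ‖f‖ * ‖a - b‖ := real_inner_le_norm _ _
    _ ≤ L * (κ + κ) := by
        gcongr
        · exact (norm_nonneg f).trans hf
        · exact (norm_sub_le a b).trans (add_le_add ha hb)
    _ = 2 * κ * L := by ring

theorem add_one_pow_succ_sub_pow_mem_Icc {a : ℝ} (ha : 0 ≤ a) (r : ℕ) :
    (a + 1) ^ (r + 1) - a ^ (r + 1) ∈ Set.Icc ((r + 1) * a ^ r) ((r + 1) * (a + 1) ^ r) := by
  have hgeom := geom_sum₂_mul (a + 1) a (r + 1)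
  rw [add_sub_cancel_left, mul_one] at hgeom
  rw [← hgeom]
  have hterm : ∀ i ∈ range (r + 1),
      a ^ r ≤ (a + 1) ^ i * a ^ (r + 1 - 1 - i) ∧
        (a + 1) ^ i * a ^ (r + 1 - 1 - i) ≤ (a + 1) ^ r := by
    intro i hi
    have hir : i + (r - i) = r := Nat.add_sub_cancel' (Nat.lt_succ_iff.mp (mem_range.mp hi))
    rw [show r + 1 - 1 - i = r - i by omega]
    constructor
    · calc a ^ r = a ^ i * a ^ (r - i) := by rw [← pow_add, hir]
        _ ≤ (a + 1) ^ i * a ^ (r - i) := by gcongr; linarith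
    · calc (a + 1) ^ i * a ^ (r - i) ≤ (a + 1) ^ i * (a + 1) ^ (r - i) := by gcongr; linarith
        _ = (a + 1) ^ r := by rw [← pow_add, hir]
  have hcard : ((range (r + 1)).card : ℝ) = r + 1 := by simp
  constructor
  · simpa [hcard] using card_nsmul_le_sum _ _ _ fun i hi => (hterm i hi).1
  · simpa [hcard] using sum_le_card_nsmul _ _ _ fun i hi => (hterm i hi).2

theorem pow_succ_le_mul_sum_Icc_pow (r T : ℕ) :
    (T : ℝ) ^ (r + 1) ≤ (r + 1) * ∑ t ∈ Icc 1 T, (t : ℝ) ^ r := by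
  induction T with
  | zero => simp
  | succ T ih =>
    have := (add_one_pow_succ_sub_pow_mem_Icc T.cast_nonneg r).2
    rw [sum_Icc_succ_top (by omega)]
    push_cast
    linarith

theorem mul_sum_Icc_pow_le (r T : ℕ) :
    (r + 1) * ∑ t ∈ Icc 1 T, (t : ℝ) ^ r ≤ (r + 1) * (T : ℝ) ^ r + (T : ℝ) ^ (r + 1) := by
  induction T with
  | zero => rw [Icc_eq_empty (by omega), sum_empty, mul_zero]; positivity
  | succ T ih =>
    have := (add_one_pow_succ_sub_pow_mem_Icc T.cast_nonneg r).1
    have hmono : (T : ℝ) ^ r ≤ ((T : ℝ) + 1) ^ r := by gcongr; linarith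
    rw [sum_Icc_succ_top (by omega)]
    push_cast
    nlinarith

theorem sum_Icc_pow_pos (r : ℕ) {T : ℕ} (hT : 1 ≤ T) : 0 < ∑ t ∈ Icc 1 T, (t : ℝ) ^ r :=
  sum_pos (fun t ht => by have := (mem_Icc.1 ht).1; positivity) ⟨1, by simp [hT]⟩

theorem mul_sum_Icc_pow_two_mul_le {p T : ℕ} (hT : p + 1 ≤ T) :
    ((p : ℝ) + 1) * ∑ t ∈ Icc 1 T, (t : ℝ) ^ (2 * p) ≤ 2 * (T : ℝ) ^ (2 * p + 1) := by
  have hsum := mul_sum_Icc_pow_le (2 * p) T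
  have hT' : (p : ℝ) + 1 ≤ T := by exact_mod_cast hT
  have hpow : ((p : ℝ) + 1) * (T : ℝ) ^ (2 * p) ≤ (T : ℝ) ^ (2 * p + 1) := by
    rw [pow_succ, mul_comm]
    gcongr
  push_cast at hsum
  refine le_of_mul_le_mul_left ?_ (by positivity : (0 : ℝ) < 2 * p + 1)
  calc (2 * (p : ℝ) + 1) * (((p : ℝ) + 1) * ∑ t ∈ Icc 1 T, (t : ℝ) ^ (2 * p))
      = ((p : ℝ) + 1) * ((2 * (p : ℝ) + 1) * ∑ t ∈ Icc 1 T, (t : ℝ) ^ (2 * p)) := by ring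
    _ ≤ ((p : ℝ) + 1) * ((2 * (p : ℝ) + 1) * (T : ℝ) ^ (2 * p) + (T : ℝ) ^ (2 * p + 1)) := by
        gcongr
    _ = (2 * (p : ℝ) + 1) * (((p : ℝ) + 1) * (T : ℝ) ^ (2 * p))
          + ((p : ℝ) + 1) * (T : ℝ) ^ (2 * p + 1) := by ring
    _ ≤ (2 * (p : ℝ) + 1) * (T : ℝ) ^ (2 * p + 1) + (2 * (p : ℝ) + 1) * (T : ℝ) ^ (2 * p + 1) := by
        gcongr
        linarith
    _ = (2 * (p : ℝ) + 1) * (2 * (T : ℝ) ^ (2 * p + 1)) := by ring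

theorem inv_sum_Icc_pow_mul_le {p q T : ℕ} (hpq : p ≤ q) (hT : 1 ≤ T) {A M : ℝ} (hM : 0 ≤ M)
    (htrivial : A ≤ (∑ t ∈ Icc 1 T, (t : ℝ) ^ q) * M)
    (hregret : A ≤ (T : ℝ) ^ (q - p) * √(∑ t ∈ Icc 1 T, (t : ℝ) ^ (2 * p)) * M) :
    (∑ t ∈ Icc 1 T, (t : ℝ) ^ q)⁻¹ * A ≤ 2 * ((q : ℝ) + 1) * M / (√((p : ℝ) + 1) * √(T : ℝ)) := by
  set Θ := ∑ t ∈ Icc 1 T, (t : ℝ) ^ q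
  set S := ∑ t ∈ Icc 1 T, (t : ℝ) ^ (2 * p)
  have hT' : (1 : ℝ) ≤ T := by exact_mod_cast hT
  have hΘ : 0 < Θ := sum_Icc_pow_pos q hT
  rw [le_div_iff₀ (by positivity), ← Real.sqrt_mul (by positivity), inv_mul_eq_div,
    div_mul_eq_mul_div, div_le_iff₀ hΘ]
  have hΘM : 0 ≤ Θ * M := by positivity
  rcases le_or_gt T (q + 1) with hsmall | hlarge
  · have hroot : √(((p : ℝ) + 1) * T) ≤ (q : ℝ) + 1 := by
      have hp : (p : ℝ) ≤ q := by exact_mod_cast hpq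
      have hTq : (T : ℝ) ≤ q + 1 := by exact_mod_cast hsmall
      rw [Real.sqrt_le_left (by positivity)]
      nlinarith
    calc A * √(((p : ℝ) + 1) * T) ≤ Θ * M * √(((p : ℝ) + 1) * T) := by gcongr
      _ ≤ Θ * M * ((q : ℝ) + 1) := by gcongr
      _ ≤ 2 * ((q : ℝ) + 1) * M * Θ := by nlinarith
  · have hroot : √S * √(((p : ℝ) + 1) * T) ≤ √2 * (T : ℝ) ^ (p + 1) := by
      rw [← Real.sqrt_mul (by positivity), Real.sqrt_le_left (by positivity), mul_pow,
        Real.sq_sqrt zero_le_two, ← pow_mul]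
      have := mul_sum_Icc_pow_two_mul_le (p := p) (T := T) (by omega)
      calc S * (((p : ℝ) + 1) * T) = (((p : ℝ) + 1) * S) * T := by ring
        _ ≤ 2 * (T : ℝ) ^ (2 * p + 1) * T := by gcongr
        _ = 2 * (T : ℝ) ^ ((p + 1) * 2) := by ring
    have hsqrt2 : √2 ≤ 2 := by rw [Real.sqrt_le_left zero_le_two]; norm_num
    have hΘT := pow_succ_le_mul_sum_Icc_pow q T
    calc A * √(((p : ℝ) + 1) * T)
        ≤ (T : ℝ) ^ (q - p) * √S * M * √(((p : ℝ) + 1) * T) := by gcongr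
      _ = (T : ℝ) ^ (q - p) * M * (√S * √(((p : ℝ) + 1) * T)) := by ring
      _ ≤ (T : ℝ) ^ (q - p) * M * (√2 * (T : ℝ) ^ (p + 1)) := by gcongr
      _ = √2 * M * (T : ℝ) ^ (q + 1) := by
          have hpow : (T : ℝ) ^ (q - p) * (T : ℝ) ^ (p + 1) = (T : ℝ) ^ (q + 1) := by
            rw [← pow_add]
            congr 1
            omega
          linear_combination (√2 * M) * hpow
      _ ≤ 2 * M * (((q : ℝ) + 1) * Θ) := by gcongr
      _ = 2 * ((q : ℝ) + 1) * M * Θ := by ring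

theorem ciSup_sub_ciInf_le {α β : Type*} {X : Set α} {Y : Set β} (hX : X.Nonempty)
    (hY : Y.Nonempty) {φ : β → ℝ} {ψ : α → ℝ} {c : ℝ} (h : ∀ b ∈ Y, ∀ a ∈ X, φ b - ψ a ≤ c) :
    (⨆ b : Y, φ b) - (⨅ a : X, ψ a) ≤ c := by
  have := hX.to_subtype
  have := hY.to_subtype
  rw [sub_le_iff_le_add]
  exact ciSup_le fun b => le_add_of_sub_left_le (le_ciInf fun a => by
    have := h b b.2 a a.2; linarith)

/-- Theorem 4, part 2: in the repeated game framework where both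
players use CBA⁺ with payoff weights `ω_t = t^p` and decision weights `θ_t = t^q`
(`q ≥ p`), the `θ`-weighted average iterates have duality gap at most
`c · κ L (q+1) / (√(p+1) √T)` for a universal `c`. -/
theorem stmt10 :
    ∃ c : ℝ, 0 < c ∧
      ∀ (n m : ℕ)
        (X : Set (EuclideanSpace ℝ (Fin n))) (Y : Set (EuclideanSpace ℝ (Fin m))),
        X.Nonempty → Convex ℝ X → IsCompact X →
        Y.Nonempty → Convex ℝ Y → IsCompact Y →
        ∀ κ : ℝ, IsGreatest (((fun x => ‖x‖) '' X) ∪ ((fun y => ‖y‖) '' Y)) κ → 0 < κ →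
        ∀ F : EuclideanSpace ℝ (Fin n) → EuclideanSpace ℝ (Fin m) → ℝ,
        (∀ y ∈ Y, ConvexOn ℝ X (fun x => F x y)) →
        (∀ x ∈ X, ConcaveOn ℝ Y (fun y => F x y)) →
        ∀ (p q : ℕ), p ≤ q → ∀ T : ℕ, 1 ≤ T →
        ∀ L : ℝ,
        ∀ (x : ℕ → EuclideanSpace ℝ (Fin n)) (y : ℕ → EuclideanSpace ℝ (Fin m))
          (f : ℕ → EuclideanSpace ℝ (Fin n)) (g : ℕ → EuclideanSpace ℝ (Fin m)),
        (∀ t ∈ Icc 1 T, x t ∈ X) → (∀ t ∈ Icc 1 T, y t ∈ Y) →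
        -- `f t` is a subgradient of `F(·, y t)` at `x t`, with `‖f t‖₂ ≤ L`
        (∀ t ∈ Icc 1 T,
          (∀ x' ∈ X, F (x t) (y t) + ⟪f t, x' - x t⟫ ≤ F x' (y t)) ∧ ‖f t‖ ≤ L) →
        -- `g t` is a supergradient of `F(x t, ·)` at `y t`, with `‖g t‖₂ ≤ L`
        (∀ t ∈ Icc 1 T,
          (∀ y' ∈ Y, F (x t) y' ≤ F (x t) (y t) + ⟪g t, y' - y t⟫) ∧ ‖g t‖ ≤ L) →
        -- CBA⁺ recursion and choice rule for the first player:
        -- `u_t^x = π_{C_X}(u_{t-1}^x + t^p • (⟨f_t, x_t⟩/κ, −f_t))`, `u_{t-1}^x = β_t • (κ, x_t)`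
        ∀ ux : ℕ → EuclideanSpace ℝ (Fin (n + 1)), ux 0 = 0 →
        (∀ t ∈ Icc 1 T,
          IsProjOn (ux (t - 1) + ((t : ℝ) ^ p) • pr (⟪f t, x t⟫ / κ) (-(f t)))
            (coneLift κ X) (ux t)) →
        (∀ t ∈ Icc 1 T, ∃ β : ℝ, 0 ≤ β ∧ ux (t - 1) = β • pr κ (x t)) →
        -- CBA⁺ recursion and choice rule for the second player:
        -- `u_t^y = π_{C_Y}(u_{t-1}^y + t^p • (−⟨g_t, y_t⟩/κ, g_t))`, `u_{t-1}^y = β'_t • (κ, y_t)`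
        ∀ uy : ℕ → EuclideanSpace ℝ (Fin (m + 1)), uy 0 = 0 →
        (∀ t ∈ Icc 1 T,
          IsProjOn (uy (t - 1) + ((t : ℝ) ^ p) • pr (-⟪g t, y t⟫ / κ) (g t))
            (coneLift κ Y) (uy t)) →
        (∀ t ∈ Icc 1 T, ∃ β : ℝ, 0 ≤ β ∧ uy (t - 1) = β • pr κ (y t)) →
        (⨆ yy : Y,
            F ((∑ t ∈ Icc 1 T, ((t : ℝ) ^ q))⁻¹ • ∑ t ∈ Icc 1 T, ((t : ℝ) ^ q) • x t) yy)
          - (⨅ xx : X,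
              F xx ((∑ t ∈ Icc 1 T, ((t : ℝ) ^ q))⁻¹ • ∑ t ∈ Icc 1 T, ((t : ℝ) ^ q) • y t))
        ≤ c * κ * L * ((q : ℝ) + 1) / (Real.sqrt ((p : ℝ) + 1) * Real.sqrt (T : ℝ)) := by
  refine ⟨8, by norm_num, ?_⟩
  intro n m X Y hXne hXconv _ hYne hYconv _ κ hκ hκpos F hFx hFy p q hpq T hT L x y f g hx hy
    hf hg ux hux0 huxproj huxchoice uy huy0 huyproj huychoice
  have hXκ : ∀ a ∈ X, ‖a‖ ≤ κ := fun a ha => hκ.2 (Or.inl ⟨a, ha, rfl⟩)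
  have hYκ : ∀ b ∈ Y, ‖b‖ ≤ κ := fun b hb => hκ.2 (Or.inr ⟨b, hb, rfl⟩)
  have hL : 0 ≤ L := (norm_nonneg _).trans (hf 1 (by simp [hT])).2
  refine ciSup_sub_ciInf_le (φ := fun b => F _ b) (ψ := fun a => F a _) hXne hYne
    fun y' hy' x' hx' => ?_
  have hgap := sub_le_inv_sum_mul_sum_of_subgradients (hFx y' hy') (hFy x' hx')
    (fun t _ => by positivity) (sum_Icc_pow_pos q hT) hx hy (fun t ht => (hf t ht).1 x' hx')
    (fun t ht => (hg t ht).1 y' hy')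
  have hregret_x := cbaPlus_regret_le hXconv hκpos hL hXκ hpq hx (fun t ht => (hf t ht).2)
    hux0 huxproj huxchoice hx'
  -- the second player runs CBA⁺ against the losses `-g t`
  have hregret_y := cbaPlus_regret_le (f := -g) hYconv hκpos hL hYκ hpq hy
    (fun t ht => (norm_neg (g t)).trans_le (hg t ht).2) huy0
    (by simpa only [Pi.neg_apply, inner_neg_left, neg_div, neg_neg] using huyproj) huychoice hy'
  simp only [Pi.neg_apply, inner_neg_left, ← inner_neg_right, neg_sub] at hregret_y
  refine hgap.trans ((inv_sum_Icc_pow_mul_le hpq hT (by positivity : 0 ≤ 4 * κ * L) ?_ ?_).trans_eq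
    (by ring))
  · rw [sum_mul]
    refine sum_le_sum fun t ht => ?_
    have := inner_sub_le_two_mul (hg t ht).2 (hYκ y' hy') (hYκ _ (hy t ht))
    have := inner_sub_le_two_mul (hf t ht).2 (hXκ _ (hx t ht)) (hXκ x' hx')
    have : (0 : ℝ) ≤ (t : ℝ) ^ q := by positivity
    nlinarith
  · simp only [mul_add, sum_add_distrib]
    linarith

end
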